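/- arXiv:2507.10068 — 3 statements merged into one kernel-verified Lean document; each statement's English description precedes it below -/
import Mathlib

section
/- For 0 ≤ w ≤ m, the submatrix of A₃^{⊗m} consisting of all rows with Hamming weight 2^w·3^{m−w} is a generator matrix of the code 𝒜(m,{w}); that is, its row space equals 𝒜(m,{w}). -/
open Finset

abbrev F2 := ZMod 2
abbrev F4 := GaloisField 2 2

def A3 : Matrix (ZMod 3) (ZMod 3) F2 := !![1,1,1; 1,1,0; 1,0,1]

/-- The `m`-fold Kronecker power of `A3`, with rows and columns indexed by `Fin m → ZMod 3`. -/
def A3pow (m : ℕ) : Matrix (Fin m → ZMod 3) (Fin m → ZMod 3) F2 :=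
  fun r c => ∏ i, A3 (r i) (c i)

/-- The DFT coefficient at frequency `j` as an `F2`-linear functional. -/
noncomputable def dftL (m : ℕ) (α : F4) (j : Fin m → ZMod 3) :
    ((Fin m → ZMod 3) → F2) →ₗ[F2] F4 :=
  ∑ i : Fin m → ZMod 3,
    α ^ (∑ l, i l * j l).val • ((Algebra.linearMap F2 F4).comp (LinearMap.proj i))

/-- The abelian code with frequency weight set `W`. -/
noncomputable def abelianCode (m : ℕ) (α : F4) (W : Finset ℕ) :
    Submodule F2 ((Fin m → ZMod 3) → F2) :=
  ⨅ j ∈ {j : Fin m → ZMod 3 | hammingNorm j ∉ W}, LinearMap.ker (dftL m α j)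

/-- The BiD code as the span of the rows of `A3pow m` with weight in the prescribed range. -/
noncomputable def BiD (m r₁ r₂ : ℕ) : Submodule F2 ((Fin m → ZMod 3) → F2) :=
  Submodule.span F2 {a | ∃ r, (2^r₂ * 3^(m-r₂) ≤ hammingNorm (A3pow m r) ∧
    hammingNorm (A3pow m r) ≤ 2^r₁ * 3^(m-r₁)) ∧ a = A3pow m r}

/-- Minimum distance of a linear code. -/
noncomputable def minDist {m : ℕ} (C : Submodule F2 ((Fin m → ZMod 3) → F2)) : ℕ :=
  sInf {d : ℕ | ∃ a ∈ C, a ≠ 0 ∧ hammingNorm a = d}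

/-
Let X = (α^{st}) be the DFT matrix of Z₃ over F₄ and Ā the image of A₃ in F₄. The DFT of a word
a is ā X^{⊗m}, so the DFT of row r of A₃^{⊗m} is row r of (ĀX)^{⊗m}. The matrices ĀX and XĀ
vanish at (s, t) unless s and t are both zero or both nonzero (row 0 of A₃ is all ones, and the
other rows and columns of A₃ have two ones), hence their Kronecker powers vanish at (r, j) unless
wt r = wt j: the rows of weight w lie in 𝒜(m,{w}). Conversely A₃⁴ = 1 and, in characteristic 2,
X² = Ā², so a = x A₃^{⊗m} with x = a (A₃³)^{⊗m}, whose image in F₄ is â (XĀ)^{⊗m}; when â is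
supported on weight w, so is x. Finally row r of A₃^{⊗m} has weight 2^{wt r} 3^{m - wt r}.
-/

open Matrix

theorem AddChar.map_sum_eq_prod {ι A M : Type*} [AddCommMonoid A] [CommMonoid M]
    (ψ : AddChar A M) (s : Finset ι) (f : ι → A) : ψ (∑ i ∈ s, f i) = ∏ i ∈ s, ψ (f i) := by
  classical
  induction s using Finset.induction_on with
  | empty => simp
  | insert i s hi ih => rw [sum_insert hi, prod_insert hi, ψ.map_add_eq_mul, ih]

namespace Matrix

def kroneckerPow {ι κ R : Type*} (σ : Type*) [Fintype σ] [CommMonoid R] (M : Matrix ι κ R) :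
    Matrix (σ → ι) (σ → κ) R :=
  of fun r c => ∏ i, M (r i) (c i)

variable {σ ι κ ν R S : Type*} [Fintype σ]

@[simp]
theorem kroneckerPow_apply [CommMonoid R] (M : Matrix ι κ R) (r : σ → ι) (c : σ → κ) :
    kroneckerPow σ M r c = ∏ i, M (r i) (c i) :=
  rfl

theorem kroneckerPow_mul [DecidableEq σ] [Fintype κ] [CommSemiring R]
    (M : Matrix ι κ R) (N : Matrix κ ν R) :
    kroneckerPow σ (M * N) = kroneckerPow σ M * kroneckerPow σ N := by
  ext r c
  simp only [kroneckerPow_apply, mul_apply, prod_univ_sum, Fintype.piFinset_univ,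
    prod_mul_distrib]

theorem kroneckerPow_one [DecidableEq σ] [DecidableEq ι] [CommSemiring R] :
    kroneckerPow σ (1 : Matrix ι ι R) = 1 := by
  ext r c
  simp only [kroneckerPow_apply, one_apply, prod_ite_zero, prod_const_one, funext_iff,
    mem_univ, true_implies]

theorem kroneckerPow_map [CommSemiring R] [CommSemiring S] (f : R →+* S) (M : Matrix ι κ R) :
    (kroneckerPow σ M).map f = kroneckerPow σ (M.map f) := by
  ext r c
  simp [map_prod]

theorem kroneckerPow_apply_eq_zero_of_hammingNorm_ne [Zero ι] [Zero κ] [DecidableEq ι]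
    [DecidableEq κ] [CommMonoidWithZero R] {M : Matrix ι κ R}
    (hM : ∀ s t, M s t ≠ 0 → (s = 0 ↔ t = 0)) {r : σ → ι} {c : σ → κ}
    (h : hammingNorm r ≠ hammingNorm c) : kroneckerPow σ M r c = 0 := by
  obtain ⟨i, hi⟩ : ∃ i, ¬(r i = 0 ↔ c i = 0) := by
    contrapose! h
    exact congrArg card (filter_congr fun i _ => (h i).not)
  exact prod_eq_zero (mem_univ i) (not_imp_comm.1 (hM _ _) hi)

theorem vecMul_kroneckerPow_apply_eq_zero [DecidableEq σ] [Fintype ι] [Zero ι] [Zero κ]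
    [DecidableEq ι] [DecidableEq κ] [CommSemiring R] {M : Matrix ι κ R}
    (hM : ∀ s t, M s t ≠ 0 → (s = 0 ↔ t = 0)) {w : ℕ} {v : (σ → ι) → R}
    (hv : ∀ j, hammingNorm j ≠ w → v j = 0) {r : σ → κ} (hr : hammingNorm r ≠ w) :
    (v ᵥ* kroneckerPow σ M) r = 0 := by
  refine sum_eq_zero fun j _ => ?_
  by_cases hj : hammingNorm j = w
  · exact mul_eq_zero_of_right _
      (kroneckerPow_apply_eq_zero_of_hammingNorm_ne hM (hj ▸ Ne.symm hr))
  · exact mul_eq_zero_of_left (hv j hj) _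

theorem hammingNorm_kroneckerPow_row [DecidableEq σ] [Fintype κ] [CommMonoidWithZero R]
    [NoZeroDivisors R] [Nontrivial R] [DecidableEq R] (M : Matrix ι κ R) (r : σ → ι) :
    hammingNorm (kroneckerPow σ M r) = ∏ i, hammingNorm (M (r i)) := by
  simp only [hammingNorm]
  rw [← Fintype.card_piFinset]
  congr 1
  ext c
  simp [Fintype.mem_piFinset, prod_ne_zero_iff]

end Matrix

section dftMatrix

variable {R K : Type*} [CommRing R] [Fintype R] [CommRing K]

def dftMatrix (ψ : AddChar R K) : Matrix R R K :=
  of fun s t => ψ (s * t)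

theorem dftMatrix_mul_self [DecidableEq R] [IsDomain K] {ψ : AddChar R K}
    (hψ : ψ.IsPrimitive) :
    dftMatrix ψ * dftMatrix ψ = of fun s u => if s + u = 0 then (Fintype.card R : K) else 0 := by
  ext s u
  simp only [dftMatrix, mul_apply, of_apply, ← AddChar.map_add_eq_mul]
  have := AddChar.sum_mulShift (s + u) hψ
  push_cast at this
  rw [← this]
  exact sum_congr rfl fun t _ => congrArg ψ (by ring)

end dftMatrix

theorem A3_mul_A3 : A3 * A3 = of fun s u => if s + u = 0 then 1 else 0 := by decide

theorem A3_mul_A3_mul_A3_mul_A3 : A3 * A3 * A3 * A3 = 1 := by decide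

theorem sum_A3_row : ∀ s, s ≠ 0 → ∑ u, A3 s u = 0 := by decide

theorem sum_A3_col : ∀ t, t ≠ 0 → ∑ u, A3 u t = 0 := by decide

theorem A3_zero_left : ∀ u, A3 0 u = 1 := by decide

theorem A3_zero_right : ∀ u, A3 u 0 = 1 := by decide

theorem hammingNorm_A3_row : ∀ s, hammingNorm (A3 s) = if s = 0 then 3 else 2 := by decide

section F2Algebra

variable {K : Type*} [CommRing K] [IsDomain K] [Algebra F2 K] {ψ : AddChar (ZMod 3) K}

theorem A3_mul_A3_map (hψ : ψ.IsPrimitive) :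
    (A3 * A3).map (algebraMap F2 K) = dftMatrix ψ * dftMatrix ψ := by
  have h3 : ((Fintype.card (ZMod 3) : ℕ) : K) = 1 := by
    rw [← map_natCast (algebraMap F2 K), show ((Fintype.card (ZMod 3) : ℕ) : F2) = 1 from rfl,
      map_one]
  rw [dftMatrix_mul_self hψ, h3, A3_mul_A3]
  ext s u
  simp [apply_ite (algebraMap F2 K)]

theorem A3_map_mul_dftMatrix_ne_zero (hψ : ψ.IsPrimitive) (s t : ZMod 3)
    (h : (A3.map (algebraMap F2 K) * dftMatrix ψ) s t ≠ 0) : s = 0 ↔ t = 0 := by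
  contrapose! h
  simp only [mul_apply, map_apply, dftMatrix, of_apply]
  rcases h with ⟨rfl, ht⟩ | ⟨hs, rfl⟩
  · simpa [A3_zero_left, ht] using AddChar.sum_mulShift t hψ
  · simp only [mul_zero, AddChar.map_zero_eq_one, mul_one, ← map_sum, sum_A3_row s hs, map_zero]

theorem dftMatrix_mul_A3_map_ne_zero (hψ : ψ.IsPrimitive) (s t : ZMod 3)
    (h : (dftMatrix ψ * A3.map (algebraMap F2 K)) s t ≠ 0) : s = 0 ↔ t = 0 := by
  contrapose! h
  simp only [mul_apply, map_apply, dftMatrix, of_apply]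
  rcases h with ⟨rfl, ht⟩ | ⟨hs, rfl⟩
  · simp only [zero_mul, AddChar.map_zero_eq_one, one_mul, ← map_sum, sum_A3_col t ht, map_zero]
  · simpa [A3_zero_right, hs, mul_comm s] using AddChar.sum_mulShift s hψ

end F2Algebra

theorem eq_of_two_pow_mul_three_pow_eq {a b c d : ℕ} (h : 2 ^ a * 3 ^ c = 2 ^ b * 3 ^ d) :
    a = b := by
  have h2 := congrArg (fun n => n.factorization 2) h
  simpa [Nat.factorization_mul, Nat.Prime.factorization_pow, Nat.prime_two.factorization,
    Nat.prime_three.factorization] using h2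

theorem hammingNorm_A3pow_row {m : ℕ} (r : Fin m → ZMod 3) :
    hammingNorm (A3pow m r) = 2 ^ hammingNorm r * 3 ^ (m - hammingNorm r) := by
  have hzeros : #{i | r i = 0} = m - hammingNorm r := by
    have := card_filter_add_card_filter_not (s := univ) (fun i => r i = 0)
    rw [card_univ, Fintype.card_fin] at this
    simp only [hammingNorm, ne_eq]
    omega
  rw [show A3pow m = kroneckerPow (Fin m) A3 from rfl, hammingNorm_kroneckerPow_row]
  simp only [hammingNorm_A3_row]
  rw [prod_ite, prod_const, prod_const, hzeros, mul_comm]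
  rfl

theorem hammingNorm_A3pow_row_eq_iff {m w : ℕ} {r : Fin m → ZMod 3} :
    hammingNorm (A3pow m r) = 2 ^ w * 3 ^ (m - w) ↔ hammingNorm r = w := by
  rw [hammingNorm_A3pow_row]
  exact ⟨eq_of_two_pow_mul_three_pow_eq, fun h => h ▸ rfl⟩

section abelianCode

variable {m : ℕ} {α : F4}

theorem mem_abelianCode_iff {W : Finset ℕ} {a : (Fin m → ZMod 3) → F2} :
    a ∈ abelianCode m α W ↔ ∀ j, hammingNorm j ∉ W → dftL m α j a = 0 := by
  simp [abelianCode, Submodule.mem_iInf]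

theorem dftL_eq_vecMul (hα : α ^ 3 = 1) (j : Fin m → ZMod 3) (a : (Fin m → ZMod 3) → F2) :
    dftL m α j a =
      ((algebraMap F2 F4 ∘ a) ᵥ* kroneckerPow (Fin m) (dftMatrix (AddChar.zmodChar 3 hα))) j := by
  simp only [dftL, LinearMap.sum_apply, LinearMap.smul_apply, LinearMap.comp_apply,
    LinearMap.proj_apply, Algebra.linearMap_apply, smul_eq_mul, vecMul, dotProduct,
    Function.comp_apply, kroneckerPow_apply, dftMatrix, of_apply]
  refine sum_congr rfl fun i _ => ?_
  rw [mul_comm, ← AddChar.map_sum_eq_prod]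
  rfl

theorem A3pow_row_mem_abelianCode (hα : IsPrimitiveRoot α 3) (r : Fin m → ZMod 3) :
    A3pow m r ∈ abelianCode m α {hammingNorm r} := by
  have hψ := AddChar.zmodChar_primitive_of_primitive_root 3 hα
  have hrow :
      algebraMap F2 F4 ∘ A3pow m r = kroneckerPow (Fin m) (A3.map (algebraMap F2 F4)) r := by
    rw [← kroneckerPow_map]
    rfl
  refine mem_abelianCode_iff.2 fun j hj => ?_
  rw [dftL_eq_vecMul hα.pow_eq_one, hrow, ← mul_apply_eq_vecMul, ← kroneckerPow_mul]
  exact kroneckerPow_apply_eq_zero_of_hammingNorm_ne (A3_map_mul_dftMatrix_ne_zero hψ)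
    (Ne.symm (by simpa using hj))

theorem abelianCode_le_span_A3pow_rows (hα : IsPrimitiveRoot α 3) (w : ℕ) :
    abelianCode m α {w} ≤ Submodule.span F2 {a | ∃ r, hammingNorm r = w ∧ a = A3pow m r} := by
  intro a ha
  rw [mem_abelianCode_iff] at ha
  have hψ := AddChar.zmodChar_primitive_of_primitive_root 3 hα
  set x := a ᵥ* kroneckerPow (Fin m) (A3 * A3 * A3)
  have hxa : x ᵥ* A3pow m = a := by
    rw [vecMul_vecMul, show A3pow m = kroneckerPow (Fin m) A3 from rfl, ← kroneckerPow_mul,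
      A3_mul_A3_mul_A3_mul_A3, kroneckerPow_one, vecMul_one]
  have hx : ∀ r, hammingNorm r ≠ w → x r = 0 := by
    intro r hr
    apply (algebraMap F2 F4).injective
    rw [map_zero, RingHom.map_vecMul, kroneckerPow_map, Matrix.map_mul, A3_mul_A3_map hψ,
      Matrix.mul_assoc, kroneckerPow_mul, ← vecMul_vecMul]
    refine vecMul_kroneckerPow_apply_eq_zero (dftMatrix_mul_A3_map_ne_zero hψ) (fun j hj => ?_) hr
    rw [← dftL_eq_vecMul]
    exact ha j (by simpa using hj)
  rw [← hxa, vecMul_eq_sum]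
  refine Submodule.sum_mem _ fun r _ => ?_
  by_cases hr : hammingNorm r = w
  · exact Submodule.smul_mem _ _ (Submodule.subset_span ⟨r, hr, rfl⟩)
  · simp [hx r hr]

end abelianCode

theorem rows_span_abelianCode_general (m w : ℕ) (α : F4) (hα : orderOf α = 3) :
    Submodule.span F2
        {a | ∃ r, hammingNorm (A3pow m r) = 2^w * 3^(m-w) ∧ a = A3pow m r}
      = abelianCode m α {w} := by
  have hprim : IsPrimitiveRoot α 3 := hα ▸ IsPrimitiveRoot.orderOf α
  simp_rw [hammingNorm_A3pow_row_eq_iff]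
  refine le_antisymm (Submodule.span_le.2 ?_) (abelianCode_le_span_A3pow_rows hprim w)
  rintro _ ⟨r, rfl, rfl⟩
  exact A3pow_row_mem_abelianCode hprim r

/-- The rows of `A3pow m` of Hamming weight `2^w * 3^(m-w)` span exactly `𝒜(m,{w})`. -/
theorem rows_span_abelianCode (m w : ℕ) (hw : w ≤ m) (α : F4) (hα : orderOf α = 3) :
    Submodule.span F2
        {a | ∃ r, hammingNorm (A3pow m r) = 2^w * 3^(m-w) ∧ a = A3pow m r}
      = abelianCode m α {w} :=
  rows_span_abelianCode_general m w α hα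
end

section
/- For m ≥ 3, the minimum distance of BiD(m, m−1, m−1) equals 3·2^{m−2}. -/
open Finset

/-!
Splitting off the first coordinate, the rows of `A3` being `111`, `110`, `101`, every word in the
span of the rows of `A3^{⊗(m+1)}` with `k` zero indices has the form `(e+a+b | e+a | e+b)`, where
`e` is spanned by rows of `A3^{⊗m}` with `k-1` zero indices and `a`, `b` by rows with `k` zero
indices. Induction on `m` then gives the weight bounds `2^m` for `k = 0`, `2^(m-1)` for `k ≤ 1`
and `3·2^(m-2)` for `k = 1`; the last one uses that the spans for `k = 0` and `k = 1` meet only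
in `0`, so that for `e ≠ 0` all three parts are nonzero. The bound is attained for `m = 3` and
preserved by `c ↦ (c | c | 0)`, which doubles the weight.
-/

section Glue

variable {α M : Type*} {m : ℕ}

def glue (f : α → (Fin m → α) → M) : (Fin (m + 1) → α) → M :=
  fun x => f (x 0) (Fin.tail x)

@[simp] lemma glue_cons (f : α → (Fin m → α) → M) (a : α) (r : Fin m → α) :
    glue f (Fin.cons a r) = f a r := by
  simp [glue]

lemma glue_injective : Function.Injective (glue : (α → (Fin m → α) → M) → _) := by
  intro f g h
  funext a r
  simpa using congrFun h (Fin.cons a r)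

lemma hammingNorm_glue [Fintype α] [Zero M] [DecidableEq M] (f : α → (Fin m → α) → M) :
    hammingNorm (glue f) = ∑ a, hammingNorm (f a) := by
  simp only [hammingNorm, card_filter, ← Fintype.sum_prod_type']
  exact Fintype.sum_equiv (Fin.consEquiv fun _ => α).symm _ _ fun _ => rfl

end Glue

lemma hammingNorm_add_le {ι : Type*} {β : ι → Type*} [Fintype ι] [∀ i, AddZeroClass (β i)]
    [∀ i, DecidableEq (β i)] (x y : ∀ i, β i) :
    hammingNorm (x + y) ≤ hammingNorm x + hammingNorm y := by
  classical
  refine (card_le_card fun i => ?_).trans (card_union_le _ _)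
  simp only [mem_filter, mem_univ, true_and, mem_union, Pi.add_apply]
  contrapose!
  rintro ⟨hx, hy⟩
  simp [hx, hy]

lemma hammingNorm_pi_prod {ι α R : Type*} [Fintype ι] [DecidableEq ι] [Fintype α]
    [CommMonoidWithZero R] [NoZeroDivisors R] [Nontrivial R] [DecidableEq R]
    (f : ι → α → R) :
    hammingNorm (fun x : ι → α => ∏ i, f i (x i)) = ∏ i, #{a | f i a ≠ 0} := by
  rw [hammingNorm, ← Fintype.card_piFinset]
  congr 1
  ext x
  simp [prod_ne_zero_iff]

lemma ZMod.sum_univ_three {M : Type*} [AddCommMonoid M] (g : ZMod 3 → M) :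
    ∑ j, g j = g 0 + g 1 + g 2 :=
  Fin.sum_univ_three g

abbrev Word (m : ℕ) := (Fin m → ZMod 3) → F2

variable {m : ℕ}

def concat3 (u v w : Word m) : Word (m + 1) :=
  glue fun j => if j = 0 then u else if j = 1 then v else w

lemma hammingNorm_concat3 (u v w : Word m) :
    hammingNorm (concat3 u v w) = hammingNorm u + hammingNorm v + hammingNorm w := by
  rw [concat3, hammingNorm_glue, ZMod.sum_univ_three]
  simp +decide

lemma concat3_add (u v w u' v' w' : Word m) :
    concat3 u v w + concat3 u' v' w' = concat3 (u + u') (v + v') (w + w') := by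
  funext x
  simp only [concat3, glue, Pi.add_apply]
  split_ifs <;> rfl

lemma concat3_smul (t : F2) (u v w : Word m) :
    t • concat3 u v w = concat3 (t • u) (t • v) (t • w) := by
  funext x
  simp only [concat3, glue, Pi.smul_apply]
  split_ifs <;> rfl

@[simp] lemma concat3_zero : concat3 (0 : Word m) 0 0 = 0 := by
  funext x
  simp only [concat3, glue, Pi.zero_apply]
  split_ifs <;> rfl

lemma concat3_inj {u v w u' v' w' : Word m} (h : concat3 u v w = concat3 u' v' w') :
    u = u' ∧ v = v' ∧ w = w' := by
  have h' := glue_injective h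
  exact ⟨by simpa using congrFun h' 0, by simpa using congrFun h' 1,
    by simpa +decide using congrFun h' 2⟩

lemma A3pow_cons_cons (i j : ZMod 3) (r s : Fin m → ZMod 3) :
    A3pow (m + 1) (Fin.cons i r) (Fin.cons j s) = A3 i j * A3pow m r s := by
  simp [A3pow, Fin.prod_univ_succ]

lemma A3pow_cons (i : ZMod 3) (r : Fin m → ZMod 3) :
    A3pow (m + 1) (Fin.cons i r) =
      concat3 (A3 i 0 • A3pow m r) (A3 i 1 • A3pow m r) (A3 i 2 • A3pow m r) := by
  funext x
  rw [← Fin.cons_self_tail x, A3pow_cons_cons, concat3, glue_cons]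
  generalize x 0 = j
  fin_cases j <;> rfl

lemma A3pow_cons_zero (r : Fin m → ZMod 3) :
    A3pow (m + 1) (Fin.cons 0 r) = concat3 (A3pow m r) (A3pow m r) (A3pow m r) := by
  obtain ⟨h0, h1, h2⟩ : A3 0 0 = 1 ∧ A3 0 1 = 1 ∧ A3 0 2 = 1 := by decide
  rw [A3pow_cons, h0, h1, h2, one_smul]

lemma A3pow_cons_one (r : Fin m → ZMod 3) :
    A3pow (m + 1) (Fin.cons 1 r) = concat3 (A3pow m r) (A3pow m r) 0 := by
  obtain ⟨h0, h1, h2⟩ : A3 1 0 = 1 ∧ A3 1 1 = 1 ∧ A3 1 2 = 0 := by decide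
  rw [A3pow_cons, h0, h1, h2, one_smul, zero_smul]

lemma A3pow_cons_two (r : Fin m → ZMod 3) :
    A3pow (m + 1) (Fin.cons 2 r) = concat3 (A3pow m r) 0 (A3pow m r) := by
  obtain ⟨h0, h1, h2⟩ : A3 2 0 = 1 ∧ A3 2 1 = 0 ∧ A3 2 2 = 1 := by decide
  rw [A3pow_cons, h0, h1, h2, one_smul, zero_smul]

def numZeros (r : Fin m → ZMod 3) : ℕ := #{l | r l = 0}

lemma numZeros_cons (i : ZMod 3) (r : Fin m → ZMod 3) :
    numZeros (Fin.cons i r : Fin (m + 1) → ZMod 3) = (if i = 0 then 1 else 0) + numZeros r := by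
  simp only [numZeros, card_filter, Fin.sum_univ_succ, Fin.cons_zero, Fin.cons_succ]

lemma hammingNorm_A3pow (r : Fin m → ZMod 3) :
    hammingNorm (A3pow m r) = 3 ^ numZeros r * 2 ^ (m - numZeros r) := by
  have hrow : ∀ i : ZMod 3, #{j | A3 i j ≠ 0} = if i = 0 then 3 else 2 := by decide
  have hcompl : #{l | ¬r l = 0} = m - numZeros r := by
    have := card_filter_add_card_filter_not (s := univ) (r · = 0)
    rw [card_univ, Fintype.card_fin] at this
    rw [numZeros]
    omega
  rw [show A3pow m r = fun c => ∏ l, A3 (r l) (c l) from rfl, hammingNorm_pi_prod]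
  simp only [hrow, prod_ite, prod_const]
  rw [hcompl]
  rfl

lemma hammingNorm_A3pow_eq_three_mul_iff (r : Fin m → ZMod 3) :
    hammingNorm (A3pow m r) = 3 * 2 ^ (m - 1) ↔ numZeros r = 1 := by
  rw [hammingNorm_A3pow]
  refine ⟨fun h => ?_, fun h => by rw [h, pow_one]⟩
  simpa [Nat.factorization_mul, Nat.prime_three.factorization, Nat.prime_two.factorization]
    using congrArg (·.factorization 3) h

/-- `rowSpan m {k}` is the code `𝒜(m, {m - k})`; in particular `BiD(m, m-1, m-1)` is
`rowSpan m {1}`. -/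
def rowSpan (m : ℕ) (S : Set ℕ) : Submodule F2 (Word m) :=
  Submodule.span F2 (A3pow m '' {r | numZeros r ∈ S})

lemma A3pow_mem_rowSpan {S : Set ℕ} {r : Fin m → ZMod 3} (hr : numZeros r ∈ S) :
    A3pow m r ∈ rowSpan m S :=
  Submodule.subset_span ⟨r, hr, rfl⟩

lemma rowSpan_mono {S T : Set ℕ} (h : S ⊆ T) : rowSpan m S ≤ rowSpan m T :=
  Submodule.span_mono (Set.image_mono fun _ hr => h hr)

@[simp] lemma rowSpan_empty : rowSpan m ∅ = ⊥ :=
  Submodule.span_eq_bot.mpr fun _ ⟨_, hr, _⟩ => absurd hr (Set.notMem_empty _)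

lemma rowSpan_zero_eq_bot {S : Set ℕ} (hS : 0 ∉ S) : rowSpan 0 S = ⊥ :=
  Submodule.span_eq_bot.mpr fun _ ⟨_, hr, _⟩ => (hS (by simpa [numZeros] using hr)).elim

lemma BiD_sub_one_eq_rowSpan_one (hm : 1 ≤ m) : BiD m (m - 1) (m - 1) = rowSpan m {1} := by
  rw [BiD, rowSpan, Nat.sub_sub_self hm, pow_one]
  congr 1
  ext c
  simp only [← le_antisymm_iff, mul_comm (2 ^ (m - 1)), eq_comm (a := 3 * 2 ^ (m - 1)),
    hammingNorm_A3pow_eq_three_mul_iff, Set.mem_ofPred_eq, Set.mem_singleton_iff]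
  exact ⟨fun ⟨r, hr, hc⟩ => ⟨r, hr, hc.symm⟩, fun ⟨r, hr, hc⟩ => ⟨r, hr, hc.symm⟩⟩

lemma exists_concat3_of_mem_rowSpan_succ {S : Set ℕ} {c : Word (m + 1)}
    (hc : c ∈ rowSpan (m + 1) S) :
    ∃ e ∈ rowSpan m ((· + 1) ⁻¹' S), ∃ a ∈ rowSpan m S, ∃ b ∈ rowSpan m S,
      c = concat3 (e + a + b) (e + a) (e + b) := by
  induction hc using Submodule.span_induction with
  | mem x hx =>
    obtain ⟨r, hr, rfl⟩ := hx
    rw [← Fin.cons_self_tail r] at hr ⊢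
    rw [Set.mem_ofPred_eq, numZeros_cons] at hr
    obtain h | h | h : r 0 = 0 ∨ r 0 = 1 ∨ r 0 = 2 := by generalize r 0 = i; revert i; decide
    · rw [h, A3pow_cons_zero]
      refine ⟨_, A3pow_mem_rowSpan (r := Fin.tail r) ?_, 0, zero_mem _, 0, zero_mem _, by simp⟩
      simpa [h, add_comm] using hr
    · rw [h, A3pow_cons_one]
      refine ⟨0, zero_mem _, _, A3pow_mem_rowSpan (r := Fin.tail r) ?_, 0, zero_mem _, by simp⟩
      simpa [h] using hr
    · rw [h, A3pow_cons_two]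
      refine ⟨0, zero_mem _, 0, zero_mem _, _, A3pow_mem_rowSpan (r := Fin.tail r) ?_, by simp⟩
      simpa +decide [h] using hr
  | zero => exact ⟨0, zero_mem _, 0, zero_mem _, 0, zero_mem _, by simp⟩
  | add x y _ _ hx hy =>
    obtain ⟨e, he, a, ha, b, hb, rfl⟩ := hx
    obtain ⟨e', he', a', ha', b', hb', rfl⟩ := hy
    refine ⟨e + e', add_mem he he', a + a', add_mem ha ha', b + b', add_mem hb hb', ?_⟩
    rw [concat3_add]
    congr 1 <;> abel
  | smul t x _ hx =>
    obtain ⟨e, he, a, ha, b, hb, rfl⟩ := hx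
    refine ⟨t • e, Submodule.smul_mem _ t he, t • a, Submodule.smul_mem _ t ha,
      t • b, Submodule.smul_mem _ t hb, ?_⟩
    simp only [concat3_smul, smul_add]

lemma exists_concat3_of_mem_rowSpan_succ_zero {c : Word (m + 1)}
    (hc : c ∈ rowSpan (m + 1) {0}) :
    ∃ a ∈ rowSpan m {0}, ∃ b ∈ rowSpan m {0}, c = concat3 (a + b) a b := by
  obtain ⟨e, he, a, ha, b, hb, rfl⟩ := exists_concat3_of_mem_rowSpan_succ hc
  obtain rfl : e = 0 := by simpa [show ((· + 1) ⁻¹' {0} : Set ℕ) = ∅ by ext; simp] using he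
  exact ⟨a, ha, b, hb, by simp only [zero_add]⟩

lemma concat3_self_zero_mem_rowSpan_succ {S : Set ℕ} {c : Word m} (hc : c ∈ rowSpan m S) :
    concat3 c c 0 ∈ rowSpan (m + 1) S := by
  induction hc using Submodule.span_induction with
  | mem x hx =>
    obtain ⟨r, hr, rfl⟩ := hx
    rw [← A3pow_cons_one]
    exact A3pow_mem_rowSpan (by simpa [numZeros_cons] using hr)
  | zero => simp
  | add x y _ _ hx hy => simpa [concat3_add] using add_mem hx hy
  | smul t x _ hx => simpa [concat3_smul] using Submodule.smul_mem _ t hx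

lemma disjoint_rowSpan_zero_one : ∀ m, Disjoint (rowSpan m {0}) (rowSpan m {1})
  | 0 => by simp [rowSpan_zero_eq_bot]
  | m + 1 => by
    rw [Submodule.disjoint_def]
    intro c hE hD
    obtain ⟨a, ha, b, hb, rfl⟩ := exists_concat3_of_mem_rowSpan_succ_zero hE
    obtain ⟨e', -, a', ha', b', hb', h⟩ := exists_concat3_of_mem_rowSpan_succ hD
    obtain ⟨h₁, h₂, h₃⟩ := concat3_inj h
    obtain rfl : e' = 0 := by
      linear_combination h₂ + h₃ - h₁ + e' * CharTwo.two_eq_zero (R := Word m)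
    simp only [zero_add] at h₂ h₃
    subst h₂ h₃
    simp [Submodule.disjoint_def.mp (disjoint_rowSpan_zero_one m) _ ha ha',
      Submodule.disjoint_def.mp (disjoint_rowSpan_zero_one m) _ hb hb']

lemma two_mul_le_hammingNorm_concat3_add {C : Submodule F2 (Word m)} {d : ℕ}
    (hC : ∀ c ∈ C, c ≠ 0 → d ≤ hammingNorm c) {a b : Word m} (ha : a ∈ C) (hb : b ∈ C)
    (hab : concat3 (a + b) a b ≠ 0) : 2 * d ≤ hammingNorm (concat3 (a + b) a b) := by
  rw [hammingNorm_concat3]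
  by_cases ha0 : a = 0
  · subst ha0
    have hb0 : b ≠ 0 := by rintro rfl; simp at hab
    simp only [zero_add, hammingNorm_zero]
    linarith [hC b hb hb0]
  by_cases hb0 : b = 0
  · subst hb0
    simp only [add_zero, hammingNorm_zero]
    linarith [hC a ha ha0]
  linarith [hC a ha ha0, hC b hb hb0]

lemma pow_two_le_hammingNorm_of_mem_rowSpan_zero :
    ∀ {m} {c : Word m}, c ∈ rowSpan m {0} → c ≠ 0 → 2 ^ m ≤ hammingNorm c
  | 0, _, _, hc => hammingNorm_pos_iff.mpr hc
  | m + 1, c, hmem, hc => by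
    obtain ⟨a, ha, b, hb, rfl⟩ := exists_concat3_of_mem_rowSpan_succ_zero hmem
    rw [pow_succ, mul_comm]
    exact two_mul_le_hammingNorm_concat3_add
      (fun _ => pow_two_le_hammingNorm_of_mem_rowSpan_zero) ha hb hc

lemma pow_two_le_hammingNorm_of_mem_rowSpan_zero_one :
    ∀ {m} {c : Word m}, c ∈ rowSpan m {0, 1} → c ≠ 0 → 2 ^ (m - 1) ≤ hammingNorm c
  | 0, _, _, hc => hammingNorm_pos_iff.mpr hc
  | m + 1, c, hmem, hc => by
    obtain ⟨e, he, a, ha, b, hb, rfl⟩ := exists_concat3_of_mem_rowSpan_succ hmem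
    rw [show ((· + 1) ⁻¹' {0, 1} : Set ℕ) = {0} by ext; simp] at he
    rw [Nat.add_sub_cancel]
    by_cases he0 : e = 0
    · subst he0
      simp only [zero_add] at hc ⊢
      calc 2 ^ m ≤ 2 * 2 ^ (m - 1) := by
            rw [← pow_succ']
            exact Nat.pow_le_pow_right two_pos (by omega)
        _ ≤ _ := two_mul_le_hammingNorm_concat3_add
          (fun _ => pow_two_le_hammingNorm_of_mem_rowSpan_zero_one) ha hb hc
    · calc 2 ^ m ≤ hammingNorm e := pow_two_le_hammingNorm_of_mem_rowSpan_zero he he0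
        _ = hammingNorm ((e + a + b) + (e + a) + (e + b)) := by
          congr 1
          linear_combination (-(e + a + b)) * CharTwo.two_eq_zero (R := Word m)
        _ ≤ _ := by
          grw [hammingNorm_concat3, hammingNorm_add_le, hammingNorm_add_le]

lemma three_mul_pow_two_le_hammingNorm_of_mem_rowSpan_one :
    ∀ {m} {c : Word m}, c ∈ rowSpan m {1} → c ≠ 0 → 3 * 2 ^ (m - 2) ≤ hammingNorm c
  | 0, c, hmem, hc => by simp [rowSpan_zero_eq_bot] at hmem; exact absurd hmem hc
  | m + 1, c, hmem, hc => by
    obtain ⟨e, he, a, ha, b, hb, rfl⟩ := exists_concat3_of_mem_rowSpan_succ hmem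
    rw [show ((· + 1) ⁻¹' {1} : Set ℕ) = {0} by ext; simp] at he
    by_cases he0 : e = 0
    · subst he0
      simp only [zero_add] at hc ⊢
      calc 3 * 2 ^ (m + 1 - 2) ≤ 2 * (3 * 2 ^ (m - 2)) := by
            rw [mul_left_comm, ← pow_succ']
            exact Nat.mul_le_mul_left 3 (Nat.pow_le_pow_right two_pos (by omega))
        _ ≤ _ := two_mul_le_hammingNorm_concat3_add
          (fun _ => three_mul_pow_two_le_hammingNorm_of_mem_rowSpan_one) ha hb hc
    have hne : ∀ d ∈ rowSpan m {1}, e + d ≠ 0 := fun d hd h =>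
      he0 (Submodule.disjoint_def.mp (disjoint_rowSpan_zero_one m) e he
        (eq_neg_of_add_eq_zero_left h ▸ neg_mem hd))
    have hB : rowSpan m {0} ≤ rowSpan m {0, 1} ∧ rowSpan m {1} ≤ rowSpan m {0, 1} :=
      ⟨rowSpan_mono (by simp), rowSpan_mono (by simp)⟩
    have hx := pow_two_le_hammingNorm_of_mem_rowSpan_zero_one
      (add_mem (add_mem (hB.1 he) (hB.2 ha)) (hB.2 hb)) (add_assoc e a b ▸ hne _ (add_mem ha hb))
    have hy := pow_two_le_hammingNorm_of_mem_rowSpan_zero_one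
      (add_mem (hB.1 he) (hB.2 ha)) (hne a ha)
    have hz := pow_two_le_hammingNorm_of_mem_rowSpan_zero_one
      (add_mem (hB.1 he) (hB.2 hb)) (hne b hb)
    rw [hammingNorm_concat3, show m + 1 - 2 = m - 1 by omega]
    omega

lemma exists_mem_rowSpan_one_hammingNorm_eq (hm : 3 ≤ m) :
    ∃ c ∈ rowSpan m {1}, hammingNorm c = 3 * 2 ^ (m - 2) := by
  induction m, hm using Nat.le_induction with
  | base =>
    -- the sum of the rows indexed by the permutations of `(0, 1, 2)` is the indicator of these
    -- six points
    refine ⟨∑ σ : Equiv.Perm (Fin 3), A3pow 3 fun i => ((σ i : ℕ) : ZMod 3),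
      sum_mem fun σ _ => A3pow_mem_rowSpan ?_, ?_⟩
    · revert σ
      decide
    · decide
  | succ m hm ih =>
    obtain ⟨c, hc, hw⟩ := ih
    refine ⟨concat3 c c 0, concat3_self_zero_mem_rowSpan_succ hc, ?_⟩
    rw [hammingNorm_concat3, hw, hammingNorm_zero, show m + 1 - 2 = m - 2 + 1 by omega,
      pow_succ]
    ring

/-- For `m ≥ 3`, the minimum distance of `BiD(m, m-1, m-1)` equals `3·2^(m-2)`. -/
theorem BiD_m_sub_one_minDist (m : ℕ) (hm : 3 ≤ m) :
    IsLeast {d : ℕ | ∃ a ∈ BiD m (m-1) (m-1), a ≠ 0 ∧ hammingNorm a = d} (3 * 2^(m-2)) := by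
  rw [BiD_sub_one_eq_rowSpan_one (by omega)]
  obtain ⟨c, hc, hw⟩ := exists_mem_rowSpan_one_hammingNorm_eq hm
  refine ⟨⟨c, hc, hammingNorm_ne_zero_iff.mp (by rw [hw]; positivity), hw⟩, ?_⟩
  rintro d ⟨c, hc, hc0, rfl⟩
  exact three_mul_pow_two_le_hammingNorm_of_mem_rowSpan_one hc hc0
end

section
/- The minimum distances of the abelian codes 𝒜(m, W_even) and 𝒜(m, W_odd) with W_even = {w ∈ {0,…,m} : w even} and W_odd = {w ∈ {0,…,m} : w odd} are at most 2m+1 and 2m respectively; hence log(d_min)/log(3^m) → 0 as m → ∞ for these code families. -/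
open Finset

/-! Let `α` be a primitive cube root of unity in `F4`. For `t : ZMod 3` the two terms
`α ^ t + α ^ (2t)` sum to `0` if `t = 0` and to `α + α² = 1` otherwise, so the DFT at
frequency `j` of the indicator of the `2m` vectors of Hamming weight one is `hammingNorm j mod 2`.
That word thus lies in the code with odd weight set, and adding the point `0` (whose DFT is
identically `1`) gives a word of weight `2m + 1` in the code with even weight set. Together with
`d ≥ 1` this gives `log d ≤ log (3m) = o(m log 3)`. -/

open Filter Matrix Topology

section CharTwo

variable {K : Type*} [Field K] [CharP K 2] {ω : K}

theorem add_sq_eq_one_of_orderOf_eq_three (hω : orderOf ω = 3) : ω + ω ^ 2 = 1 := by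
  have hprim : IsPrimitiveRoot ω 3 := hω ▸ IsPrimitiveRoot.orderOf ω
  have hsum := hprim.geom_sum_eq_zero (by norm_num)
  simp only [sum_range_succ, sum_range_zero, pow_zero, pow_one, zero_add] at hsum
  linear_combination hsum - CharTwo.two_eq_zero (R := K)

theorem pow_val_add_pow_val_two_mul (hω : orderOf ω = 3) (t : ZMod 3) :
    ω ^ t.val + ω ^ (2 * t).val = if t = 0 then 0 else 1 := by
  have h := add_sq_eq_one_of_orderOf_eq_three hω
  fin_cases t
  · change ω ^ 0 + ω ^ 0 = if (0 : ZMod 3) = 0 then 0 else 1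
    rw [if_pos rfl, pow_zero, one_add_one_eq_two, CharTwo.two_eq_zero]
  · change ω ^ 1 + ω ^ 2 = if (1 : ZMod 3) = 0 then 0 else 1
    rw [if_neg (by decide), pow_one, h]
  · change ω ^ 2 + ω ^ 1 = if (2 : ZMod 3) = 0 then 0 else 1
    rw [if_neg (by decide), pow_one, add_comm, h]

end CharTwo

theorem tendsto_log_div_log_pow_of_le_mul {f : ℕ → ℕ} {b : ℝ} (c : ℕ) (hb : 1 < b)
    (hf : ∀ᶠ m in atTop, 0 < f m ∧ f m ≤ c * m) :
    Tendsto (fun m => Real.log (f m) / Real.log (b ^ m)) atTop (𝓝 0) := by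
  have hlogb : 0 < Real.log b := Real.log_pos hb
  have hlog_div : Tendsto (fun m : ℕ => Real.log m / m) atTop (𝓝 0) := by
    simpa [Function.comp_def] using
      (Real.tendsto_pow_log_div_mul_add_atTop 1 0 1 one_ne_zero).comp tendsto_natCast_atTop_atTop
  have hupper : Tendsto (fun m : ℕ => (Real.log c / m + Real.log m / m) / Real.log b)
      atTop (𝓝 0) := by
    simpa using ((tendsto_const_div_atTop_nhds_zero_nat (Real.log c)).add hlog_div).div_const
      (Real.log b)
  refine tendsto_of_tendsto_of_tendsto_of_le_of_le' tendsto_const_nhds hupper ?_ ?_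
  all_goals
    filter_upwards [hf, eventually_gt_atTop 0] with m ⟨hpos, hle⟩ hm
    rw [Real.log_pow]
  · exact div_nonneg (Real.log_nonneg (by exact_mod_cast hpos)) (by positivity)
  · have hc : 0 < c := Nat.pos_of_mul_pos_right (hpos.trans_le hle)
    calc Real.log (f m) / (m * Real.log b)
        ≤ Real.log (c * m) / (m * Real.log b) := by
          gcongr
          exact_mod_cast hle
      _ = (Real.log c / m + Real.log m / m) / Real.log b := by
          rw [Real.log_mul (by positivity) (by positivity)]
          field_simp

theorem hammingNorm_indicator_one {ι R : Type*} [Fintype ι] [MulZeroOneClass R] [NeZero (1 : R)]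
    [DecidableEq R] (S : Finset ι) : hammingNorm ((S : Set ι).indicator (1 : ι → R)) = #S := by
  classical
  unfold hammingNorm
  congr 1
  ext i
  simp [Set.indicator_apply]

section Codes

variable {m : ℕ}

theorem minDist_le_hammingNorm {C : Submodule F2 ((Fin m → ZMod 3) → F2)}
    {a : (Fin m → ZMod 3) → F2} (ha : a ∈ C) (ha0 : a ≠ 0) : minDist C ≤ hammingNorm a :=
  Nat.sInf_le ⟨a, ha, ha0, rfl⟩

theorem minDist_pos {C : Submodule F2 ((Fin m → ZMod 3) → F2)}
    {a : (Fin m → ZMod 3) → F2} (ha : a ∈ C) (ha0 : a ≠ 0) : 0 < minDist C := by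
  obtain ⟨b, -, hb0, hb⟩ := Nat.sInf_mem (⟨_, a, ha, ha0, rfl⟩ :
    {d : ℕ | ∃ a ∈ C, a ≠ 0 ∧ hammingNorm a = d}.Nonempty)
  rw [minDist, ← hb]
  exact hammingNorm_pos_iff.2 hb0

theorem minDist_pos_and_le_card {C : Submodule F2 ((Fin m → ZMod 3) → F2)}
    {S : Finset (Fin m → ZMod 3)} (hS : S.Nonempty)
    (hC : (S : Set (Fin m → ZMod 3)).indicator (1 : (Fin m → ZMod 3) → F2) ∈ C) :
    0 < minDist C ∧ minDist C ≤ #S := by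
  have hne : (S : Set (Fin m → ZMod 3)).indicator (1 : (Fin m → ZMod 3) → F2) ≠ 0 := by
    rw [← hammingNorm_pos_iff, hammingNorm_indicator_one]
    exact hS.card_pos
  exact ⟨minDist_pos hC hne,
    hammingNorm_indicator_one (R := F2) S ▸ minDist_le_hammingNorm hC hne⟩

theorem mem_abelianCode_filter_range {α : F4} {p : ℕ → Prop} [DecidablePred p]
    {a : (Fin m → ZMod 3) → F2} :
    a ∈ abelianCode m α ((range (m + 1)).filter p) ↔
      ∀ j, ¬ p (hammingNorm j) → dftL m α j a = 0 := by
  have hle (j : Fin m → ZMod 3) : hammingNorm j < m + 1 :=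
    Nat.lt_succ_of_le (by simpa using hammingNorm_le_card_fintype (x := j))
  simp [abelianCode, Submodule.mem_iInf, hle]

theorem dftL_indicator_one (α : F4) (j : Fin m → ZMod 3) (S : Finset (Fin m → ZMod 3)) :
    dftL m α j ((S : Set (Fin m → ZMod 3)).indicator 1) =
      ∑ x ∈ S, α ^ (x ⬝ᵥ j).val := by
  simp only [dftL, LinearMap.sum_apply, LinearMap.smul_apply, LinearMap.coe_comp,
    LinearMap.coe_proj, Function.comp_apply, Function.eval, Set.indicator_apply, SetLike.mem_coe,
    Pi.one_apply, Algebra.linearMap_apply, MonoidWithZeroHom.map_ite_one_zero, smul_eq_mul,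
    mul_ite, mul_one, mul_zero, sum_ite_mem, univ_inter]
  rfl

def weightOneVectors (m : ℕ) : Finset (Fin m → ZMod 3) :=
  (univ ×ˢ {1, 2}).image fun p : Fin m × ZMod 3 => Pi.single p.1 p.2

theorem sum_weightOneVectors {M : Type*} [AddCommMonoid M] (g : (Fin m → ZMod 3) → M) :
    ∑ x ∈ weightOneVectors m, g x = ∑ l, (g (Pi.single l 1) + g (Pi.single l 2)) := by
  have hinj : Set.InjOn (fun p : Fin m × ZMod 3 => (Pi.single p.1 p.2 : Fin m → ZMod 3))
      ↑(univ ×ˢ {1, 2} : Finset (Fin m × ZMod 3)) := by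
    rintro ⟨l, c⟩ hc ⟨l', c'⟩ - h
    have hc0 : c ≠ 0 := by
      rcases (by simpa using hc : c = 1 ∨ c = 2) with rfl | rfl <;> decide
    obtain rfl : l = l' := by
      by_contra hl
      exact hc0 (by simpa [Pi.single_eq_of_ne hl] using congrFun h l)
    simpa using Pi.single_injective l h
  rw [weightOneVectors, sum_image hinj, sum_product]
  exact sum_congr rfl fun l _ => sum_pair (by decide)

theorem card_weightOneVectors : #(weightOneVectors m) = 2 * m := by
  rw [card_eq_sum_ones, sum_weightOneVectors]
  simp [mul_comm]

theorem zero_notMem_weightOneVectors : 0 ∉ weightOneVectors m := by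
  simp [weightOneVectors, show (0 : ZMod 3) ≠ 2 by decide]

theorem weightOneVectors_nonempty (hm : 0 < m) : (weightOneVectors m).Nonempty :=
  ⟨_, mem_image.2 ⟨(⟨0, hm⟩, 1), by simp, rfl⟩⟩

theorem dftL_indicator_weightOneVectors {α : F4} (hα : orderOf α = 3) (j : Fin m → ZMod 3) :
    dftL m α j ((weightOneVectors m : Set (Fin m → ZMod 3)).indicator 1) = hammingNorm j := by
  rw [dftL_indicator_one, sum_weightOneVectors]
  simp only [single_dotProduct, one_mul, pow_val_add_pow_val_two_mul hα, hammingNorm]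
  simp [sum_ite]

theorem indicator_weightOneVectors_mem_abelianCode_odd {α : F4} (hα : orderOf α = 3) :
    (weightOneVectors m : Set (Fin m → ZMod 3)).indicator 1 ∈
      abelianCode m α ((range (m + 1)).filter Odd) := by
  refine mem_abelianCode_filter_range.2 fun j hj => ?_
  rw [dftL_indicator_weightOneVectors hα, CharTwo.natCast_eq_ite,
    if_pos (Nat.not_odd_iff_even.1 hj)]

theorem indicator_insert_zero_weightOneVectors_mem_abelianCode_even {α : F4}
    (hα : orderOf α = 3) :
    ((insert 0 (weightOneVectors m) : Finset _) : Set (Fin m → ZMod 3)).indicator 1 ∈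
      abelianCode m α ((range (m + 1)).filter Even) := by
  refine mem_abelianCode_filter_range.2 fun j hj => ?_
  rw [dftL_indicator_one, sum_insert zero_notMem_weightOneVectors, ← dftL_indicator_one,
    dftL_indicator_weightOneVectors hα, CharTwo.natCast_eq_ite, if_neg hj, zero_dotProduct,
    ZMod.val_zero, pow_zero, one_add_one_eq_two, CharTwo.two_eq_zero]

end Codes

/-- The minimum distances of the abelian codes with even (resp. odd) frequency weight
sets are at most `2m+1` (resp. `2m`); hence `log d_min / log 3^m → 0`. -/
theorem evenOdd_minDist_bound (α : F4) (hα : orderOf α = 3) :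
    (∀ m : ℕ, 1 ≤ m →
      minDist (abelianCode m α ((Finset.range (m+1)).filter Even)) ≤ 2*m + 1 ∧
      minDist (abelianCode m α ((Finset.range (m+1)).filter Odd)) ≤ 2*m) ∧
    Filter.Tendsto (fun m : ℕ =>
        Real.log (minDist (abelianCode m α ((Finset.range (m+1)).filter Even)))
          / Real.log (3^m)) Filter.atTop (nhds 0) ∧
    Filter.Tendsto (fun m : ℕ =>
        Real.log (minDist (abelianCode m α ((Finset.range (m+1)).filter Odd)))
          / Real.log (3^m)) Filter.atTop (nhds 0) := by
  have hEven (m : ℕ) : 0 < minDist (abelianCode m α ((range (m + 1)).filter Even)) ∧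
      minDist (abelianCode m α ((range (m + 1)).filter Even)) ≤ 2 * m + 1 := by
    simpa [card_insert_of_notMem zero_notMem_weightOneVectors, card_weightOneVectors] using
      minDist_pos_and_le_card (insert_nonempty 0 _)
        (indicator_insert_zero_weightOneVectors_mem_abelianCode_even (m := m) hα)
  have hOdd (m : ℕ) (hm : 0 < m) : 0 < minDist (abelianCode m α ((range (m + 1)).filter Odd)) ∧
      minDist (abelianCode m α ((range (m + 1)).filter Odd)) ≤ 2 * m := by
    simpa [card_weightOneVectors] using minDist_pos_and_le_card (weightOneVectors_nonempty hm)
      (indicator_weightOneVectors_mem_abelianCode_odd hα)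
  refine ⟨fun m hm => ⟨(hEven m).2, (hOdd m hm).2⟩, ?_, ?_⟩
  · refine tendsto_log_div_log_pow_of_le_mul 3 (by norm_num) ?_
    filter_upwards [eventually_gt_atTop 0] with m hm
    exact ⟨(hEven m).1, (hEven m).2.trans (by omega)⟩
  · refine tendsto_log_div_log_pow_of_le_mul 3 (by norm_num) ?_
    filter_upwards [eventually_gt_atTop 0] with m hm
    exact ⟨(hOdd m hm).1, (hOdd m hm).2.trans (by omega)⟩
end
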